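/- arXiv:2310.01134 — 5 statements merged into one kernel-verified Lean document; each statement's English description precedes it below -/
import Mathlib

section
/- Let B be a finite simple graph and let v be a universal vertex of B. Then B can be P-saturated by a coloring of weight at least k if and only if B − v can be P-saturated by a coloring of weight at least k, where P is the pattern with a ⊕-arc from white to black and a ⊖-arc from black to white. -/
/-- P-saturation with weight at least k for the pattern with a ⊕-arc from white to
black and a ⊖-arc from black to white. Black is `true`. -/
def PSatGe {V : Type*} [Fintype V] (G : SimpleGraph V) (k : ℕ) : Prop :=
  ∃ (c : V → Bool) (w : V → V), (∀ x, w x ≠ x) ∧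
    (∀ x, (G.Adj x (w x) → c x = false ∧ c (w x) = true) ∧
          (¬ G.Adj x (w x) → c x = true ∧ c (w x) = false)) ∧
    k ≤ (Finset.univ.filter (fun v => c v = true)).card

/-- deleting a universal vertex does not change P-saturability with
weight at least k. -/
theorem stmt_5 {V : Type*} [Fintype V] [DecidableEq V] (G : SimpleGraph V)
    (k : ℕ) (v : V)
    (hcard : 3 ≤ Fintype.card V)
    (huniv : ∀ u : V, u ≠ v → G.Adj v u) :
    PSatGe G k ↔ PSatGe (G.induce {u : V | u ≠ v}) k := by
  constructor
  · rintro ⟨c, w, hw, hcond, hk⟩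
    have hadjv : G.Adj v (w v) := huniv (w v) (hw v)
    have hcv : c v = false := ((hcond v).1 hadjv).1
    have hwv : ∀ x : V, x ≠ v → w x ≠ v := by
      intro x hx he
      have hadj : G.Adj x (w x) := by rw [he]; exact (huniv x hx).symm
      have := ((hcond x).1 hadj).2
      rw [he, hcv] at this
      exact Bool.false_ne_true this
    refine ⟨fun u => c u.val, fun u => ⟨w u.val, hwv u.val u.prop⟩, ?_, ?_, ?_⟩
    · intro x he
      exact hw x.val (congrArg Subtype.val he)
    · intro x
      constructor
      · intro h
        exact (hcond x.val).1 h
      · intro h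
        exact (hcond x.val).2 h
    · refine le_trans hk (le_of_eq ?_)
      refine Finset.card_bij (fun a ha => ⟨a, ?_⟩) ?_ ?_ ?_
      · have : c a = true := (Finset.mem_filter.mp ha).2
        intro he
        rw [he, hcv] at this
        exact Bool.false_ne_true this
      · intro a ha
        simp only [Finset.mem_filter, Finset.mem_univ, true_and]
        exact (Finset.mem_filter.mp ha).2
      · intro a ha b hb he
        exact congrArg Subtype.val he
      · intro b hb
        refine ⟨b.val, Finset.mem_filter.mpr ⟨Finset.mem_univ _, (Finset.mem_filter.mp hb).2⟩, rfl⟩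
  · rintro ⟨c', w', hw', hcond', hk'⟩
    obtain ⟨x0, hx0⟩ := Fintype.exists_ne_of_one_lt_card (by omega) v
    set X0 : {u : V | u ≠ v} := ⟨x0, hx0⟩ with hX0
    have hblack : ∃ b : {u : V | u ≠ v}, c' b = true := by
      by_cases h : c' X0 = true
      · exact ⟨X0, h⟩
      · refine ⟨w' X0, ?_⟩
        by_cases hadj : (G.induce {u : V | u ≠ v}).Adj X0 (w' X0)
        · exact ((hcond' X0).1 hadj).2
        · exact absurd ((hcond' X0).2 hadj).1 h
    obtain ⟨b, hb⟩ := hblack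
    classical
    refine ⟨fun u => if h : u = v then false else c' ⟨u, h⟩,
            fun u => if h : u = v then b.val else (w' ⟨u, h⟩).val, ?_, ?_, ?_⟩
    · intro x
      by_cases h : x = v
      · simp only [h, dif_pos]
        exact b.prop
      · simp only [dif_neg h]
        intro he
        exact hw' ⟨x, h⟩ (Subtype.ext he)
    · intro x
      by_cases h : x = v
      · subst h
        simp only [dif_pos]
        have hadj : G.Adj x (b.val) := huniv b.val b.prop
        constructor
        · intro _
          refine ⟨by simp, ?_⟩
          simp only [dif_neg b.prop]
          exact hb
        · intro hcon
          exact absurd hadj hcon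
      · simp only [dif_neg h]
        have hne : (w' ⟨x, h⟩).val ≠ v := (w' ⟨x, h⟩).prop
        constructor
        · intro hadj
          have := (hcond' ⟨x, h⟩).1 hadj
          simpa only [dif_neg h, dif_neg hne] using this
        · intro hnadj
          have := (hcond' ⟨x, h⟩).2 hnadj
          simpa only [dif_neg h, dif_neg hne] using this
    · refine le_trans hk' (Finset.card_le_card_of_injOn (fun u => u.val) ?_ ?_)
      · intro u hu
        simp only [Finset.mem_coe, Finset.mem_filter, Finset.mem_univ, true_and] at hu ⊢
        rw [dif_neg u.prop]
        exact hu
      · intro a _ b _ he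
        exact Subtype.ext he
end

section
/- Let B be a finite simple graph and let v be an isolated vertex of B. Then B can be P-saturated by a coloring of weight at least k if and only if B − v can be P-saturated by a coloring of weight at least k − 1, where P is the pattern with a ⊕-arc from white to black and a ⊖-arc from black to white. -/
lemma card_aux {V : Type*} [Fintype V] [DecidableEq V] (v : V) (c : V → Bool)
    (hcv : c v = true) :
    (Finset.univ.filter fun u : V => c u = true).card
      = (Finset.univ.filter fun u : {u : V | u ≠ v} => c u.1 = true).card + 1 := by
  classical
  have hmem : v ∈ Finset.univ.filter (fun u : V => c u = true) := by simp [hcv]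
  have hb : (Finset.univ.filter fun u : {u : V | u ≠ v} => c u.1 = true).card
      = ((Finset.univ.filter fun u : V => c u = true).erase v).card := by
    apply Finset.card_bij (fun u _ => u.1)
    · intro a ha
      simp only [Finset.mem_filter, Finset.mem_univ, true_and] at ha
      simp only [Finset.mem_erase, Finset.mem_filter, Finset.mem_univ, true_and]
      exact ⟨a.2, ha⟩
    · intro a _ b _ h; exact Subtype.ext h
    · intro b hb
      simp only [Finset.mem_erase, Finset.mem_filter, Finset.mem_univ, true_and] at hb
      exact ⟨⟨b, hb.1⟩, by simp [hb.2], rfl⟩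
  have hpos : 0 < (Finset.univ.filter fun u : V => c u = true).card :=
    Finset.card_pos.mpr ⟨v, hmem⟩
  rw [hb, Finset.card_erase_of_mem hmem]
  omega

/-- deleting an isolated vertex lowers the achievable weight threshold
by exactly one. -/
theorem stmt_6 {V : Type*} [Fintype V] [DecidableEq V] (G : SimpleGraph V)
    (k : ℕ) (v : V)
    (hcard : 3 ≤ Fintype.card V) (hk : 1 ≤ k)
    (hiso : ∀ u : V, ¬ G.Adj v u) :
    PSatGe G k ↔ PSatGe (G.induce {u : V | u ≠ v}) (k - 1) := by
  classical
  constructor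
  · rintro ⟨c, w, hw, hprop, hcard'⟩
    have hcv : c v = true := ((hprop v).2 (hiso (w v))).1
    have hwv : ∀ x : V, x ≠ v → w x ≠ v := by
      intro x hx hwx
      have hadj : ¬ G.Adj x (w x) := by
        rw [hwx]; exact fun h => hiso x h.symm
      have h2 := ((hprop x).2 hadj).2
      rw [hwx, hcv] at h2
      simp at h2
    refine ⟨fun u => c u.1, fun u => ⟨w u.1, hwv u.1 u.2⟩, ?_, ?_, ?_⟩
    · intro x h
      exact hw x.1 (congrArg Subtype.val h)
    · intro x
      constructor
      · intro h
        exact (hprop x.1).1 h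
      · intro h
        exact (hprop x.1).2 h
    · show k - 1 ≤ (Finset.univ.filter fun u : {u : V | u ≠ v} => c u.1 = true).card
      have := card_aux v c hcv
      omega
  · rintro ⟨c, w, hw, hprop, hcard'⟩
    have hne : Nonempty {u : V | u ≠ v} := by
      obtain ⟨x, hx⟩ := Fintype.exists_ne_of_one_lt_card (by omega) v
      exact ⟨⟨x, hx⟩⟩
    obtain ⟨u0, hu0⟩ : ∃ u : {u : V | u ≠ v}, c u = false := by
      obtain ⟨x⟩ := hne
      by_cases h : (G.induce {u : V | u ≠ v}).Adj x (w x)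
      · exact ⟨x, ((hprop x).1 h).1⟩
      · exact ⟨w x, ((hprop x).2 h).2⟩
    set cV : V → Bool := fun x => if h : x = v then true else c ⟨x, h⟩ with hcV
    set wV : V → V := fun x => if h : x = v then u0.1 else (w ⟨x, h⟩).1 with hwV
    have hcVv : cV v = true := by simp [hcV]
    have hcVne : ∀ (x : V) (h : x ≠ v), cV x = c ⟨x, h⟩ := by
      intro x h; simp only [hcV]; exact dif_neg h
    have hwVv : wV v = u0.1 := by simp [hwV]
    have hwVne : ∀ (x : V) (h : x ≠ v), wV x = (w ⟨x, h⟩).1 := by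
      intro x h; simp only [hwV]; exact dif_neg h
    refine ⟨cV, wV, ?_, ?_, ?_⟩
    · intro x
      by_cases h : x = v
      · rw [h, hwVv]; exact u0.2
      · rw [hwVne x h]
        intro he
        exact hw ⟨x, h⟩ (Subtype.ext he)
    · intro x
      by_cases h : x = v
      · constructor
        · intro hadj; rw [h] at hadj; exact absurd hadj (hiso _)
        · intro _
          rw [h, hwVv, hcVne u0.1 u0.2]
          exact ⟨hcVv, hu0⟩
      · have hwVx : wV x = (w ⟨x, h⟩).1 := hwVne x h
        have hadj_iff : G.Adj x (wV x) ↔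
            (G.induce {u : V | u ≠ v}).Adj ⟨x, h⟩ (w ⟨x, h⟩) := by
          rw [hwVx]
          exact Iff.rfl
        constructor
        · intro hadj
          have := (hprop ⟨x, h⟩).1 (hadj_iff.mp hadj)
          rw [hcVne x h, hwVx, hcVne _ (w ⟨x, h⟩).2]
          exact this
        · intro hadj
          have := (hprop ⟨x, h⟩).2 (fun ha => hadj (hadj_iff.mpr ha))
          rw [hcVne x h, hwVx, hcVne _ (w ⟨x, h⟩).2]
          exact this
    · have hc := card_aux v cV hcVv
      have heq : (Finset.univ.filter fun u : {u : V | u ≠ v} => cV u.1 = true)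
          = (Finset.univ.filter fun u : {u : V | u ≠ v} => c u = true) := by
        apply Finset.filter_congr
        intro u _
        rw [hcVne u.1 u.2]
      rw [heq] at hc
      omega
end

section
/- Let B' be a finite simple graph whose maximal peeling sequence is ({i₀}, {u₁}, {i₁}, {u₂}, …), obtained by alternately removing the unique isolated vertex and then the unique universal vertex of the remaining graph. Then for every j, the vertex i_j has degree exactly j in B' and its neighborhood in B' is exactly {u₁, …, u_j}; moreover every vertex of B' other than i₀, …, i_j has degree at least j in B'. -/
/-- In a graph whose maximal peeling alternately removes a unique
isolated vertex i_j and a unique universal vertex u_j (all in the remaining graph),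
the vertex i_j has degree exactly j in the original graph, its neighborhood is
exactly {u_1, …, u_j}, and every vertex other than i_0, …, i_j has degree ≥ j. -/
theorem stmt_7 {V : Type*} [Fintype V] [DecidableEq V] (G : SimpleGraph V)
    [DecidableRel G.Adj] (l : ℕ) (i u : ℕ → V)
    (hi_inj : ∀ j₁ ≤ l, ∀ j₂ ≤ l, i j₁ = i j₂ → j₁ = j₂)
    (hu_inj : ∀ j₁, 1 ≤ j₁ → j₁ ≤ l → ∀ j₂, 1 ≤ j₂ → j₂ ≤ l → u j₁ = u j₂ → j₁ = j₂)
    (hiu : ∀ j₁ ≤ l, ∀ j₂, 1 ≤ j₂ → j₂ ≤ l → i j₁ ≠ u j₂)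
    -- i_j is isolated after removing i_0,…,i_{j-1} and u_1,…,u_j :
    (hIso : ∀ j ≤ l, ∀ y : V,
      y ∉ (Finset.range j).image i ∪ (Finset.Icc 1 j).image u → ¬ G.Adj (i j) y)
    -- u_j is universal after removing i_0,…,i_{j-1} and u_1,…,u_{j-1} :
    (hUni : ∀ j, 1 ≤ j → j ≤ l → ∀ y : V,
      y ∉ (Finset.range j).image i ∪ (Finset.Icc 1 (j - 1)).image u →
      y ≠ u j → G.Adj (u j) y) :
    ∀ j ≤ l,
      G.neighborFinset (i j) = (Finset.Icc 1 j).image u ∧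
      G.degree (i j) = j ∧
      ∀ y : V, y ∉ (Finset.range (j + 1)).image i → j ≤ G.degree y := by
  intro j hj
  have hnb : G.neighborFinset (i j) = (Finset.Icc 1 j).image u := by
    ext y
    simp only [SimpleGraph.mem_neighborFinset, Finset.mem_image, Finset.mem_Icc]
    constructor
    · intro hadj
      by_contra hne
      have hy : y ∉ (Finset.range j).image i ∪ (Finset.Icc 1 j).image u := by
        intro hmem
        rcases Finset.mem_union.mp hmem with h | h
        · obtain ⟨k, hk, rfl⟩ := Finset.mem_image.mp h
          have hk' := Finset.mem_range.mp hk
          have hkl : k ≤ l := le_trans (le_of_lt hk') hj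
          have hni : ¬ G.Adj (i k) (i j) := by
            apply hIso k hkl
            intro hmem'
            rcases Finset.mem_union.mp hmem' with h' | h'
            · obtain ⟨m, hm, heq⟩ := Finset.mem_image.mp h'
              have hm' := Finset.mem_range.mp hm
              have := hi_inj m (by omega) j hj heq
              omega
            · obtain ⟨m, hm, heq⟩ := Finset.mem_image.mp h'
              obtain ⟨hm1, hm2⟩ := Finset.mem_Icc.mp hm
              exact hiu j hj m hm1 (by omega) heq.symm
          exact hni hadj.symm
        · obtain ⟨k, hk, rfl⟩ := Finset.mem_image.mp h
          exact hne ⟨k, Finset.mem_Icc.mp hk, rfl⟩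
      exact hIso j hj y hy hadj
    · rintro ⟨k, ⟨hk1, hk2⟩, rfl⟩
      have hkl : k ≤ l := le_trans hk2 hj
      have : G.Adj (u k) (i j) := by
        apply hUni k hk1 hkl (i j) _ (hiu j hj k hk1 hkl)
        intro hmem
        rcases Finset.mem_union.mp hmem with h | h
        · obtain ⟨m, hm, heq⟩ := Finset.mem_image.mp h
          have hm' := Finset.mem_range.mp hm
          have := hi_inj m (by omega) j hj heq
          omega
        · obtain ⟨m, hm, heq⟩ := Finset.mem_image.mp h
          obtain ⟨hm1, hm2⟩ := Finset.mem_Icc.mp hm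
          exact hiu j hj m hm1 (by omega) heq.symm
      exact this.symm
  have hdeg : G.degree (i j) = j := by
    rw [← SimpleGraph.card_neighborFinset_eq_degree, hnb,
      Finset.card_image_of_injOn, Nat.card_Icc]
    · omega
    · intro a ha b hb hab
      simp only [Finset.coe_Icc, Set.mem_Icc] at ha hb
      exact hu_inj a ha.1 (le_trans ha.2 hj) b hb.1 (le_trans hb.2 hj) hab
  refine ⟨hnb, hdeg, ?_⟩
  intro y hy
  have hyni : ∀ m ≤ j, y ≠ i m := by
    intro m hm he
    exact hy (Finset.mem_image.mpr ⟨m, Finset.mem_range.mpr (by omega), he.symm⟩)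
  set f : ℕ → V := fun k => if u k = y then i k else u k with hf
  have hinj : Set.InjOn f ↑(Finset.Icc 1 j) := by
    intro a ha b hb hab
    simp only [Finset.coe_Icc, Set.mem_Icc] at ha hb
    have hal : a ≤ l := le_trans ha.2 hj
    have hbl : b ≤ l := le_trans hb.2 hj
    by_cases h1 : u a = y <;> by_cases h2 : u b = y <;>
      simp only [hf, h1, h2, if_pos, if_neg, if_true, if_false] at hab
    · exact hi_inj a hal b hbl hab
    · exact absurd hab (hiu a hal b hb.1 hbl)
    · exact absurd hab.symm (hiu b hbl a ha.1 hal)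
    · exact hu_inj a ha.1 hal b hb.1 hbl hab
  have hsub : (Finset.Icc 1 j).image f ⊆ G.neighborFinset y := by
    intro x hx
    obtain ⟨k, hk, rfl⟩ := Finset.mem_image.mp hx
    obtain ⟨hk1, hk2⟩ := Finset.mem_Icc.mp hk
    have hkl : k ≤ l := le_trans hk2 hj
    rw [SimpleGraph.mem_neighborFinset]
    by_cases h1 : u k = y
    · simp only [hf, if_pos h1]
      rw [← h1]
      apply hUni k hk1 hkl (i k) _ (hiu k hkl k hk1 hkl)
      intro hmem
      rcases Finset.mem_union.mp hmem with h | h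
      · obtain ⟨m, hm, heq⟩ := Finset.mem_image.mp h
        have hm' := Finset.mem_range.mp hm
        have := hi_inj m (by omega) k hkl heq
        omega
      · obtain ⟨m, hm, heq⟩ := Finset.mem_image.mp h
        obtain ⟨hm1, hm2⟩ := Finset.mem_Icc.mp hm
        exact hiu k hkl m hm1 (by omega) heq.symm
    · simp only [hf, if_neg h1]
      by_cases h2 : ∃ m, 1 ≤ m ∧ m < k ∧ u m = y
      · obtain ⟨m, hm1, hm2, hm3⟩ := h2
        rw [← hm3]
        apply hUni m hm1 (by omega) (u k) _ (fun he => h1 (by rw [he, hm3]))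
        intro hmem
        rcases Finset.mem_union.mp hmem with h | h
        · obtain ⟨p, hp, heq⟩ := Finset.mem_image.mp h
          have hp' := Finset.mem_range.mp hp
          exact hiu p (by omega) k hk1 hkl heq
        · obtain ⟨p, hp, heq⟩ := Finset.mem_image.mp h
          obtain ⟨hp1, hp2⟩ := Finset.mem_Icc.mp hp
          have := hu_inj p hp1 (by omega) k hk1 hkl heq
          omega
      · refine (hUni k hk1 hkl y ?_ (fun he => h1 he.symm)).symm
        intro hmem
        rcases Finset.mem_union.mp hmem with h | h
        · obtain ⟨m, hm, heq⟩ := Finset.mem_image.mp h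
          have hm' := Finset.mem_range.mp hm
          exact hyni m (by omega) heq.symm
        · obtain ⟨m, hm, heq⟩ := Finset.mem_image.mp h
          obtain ⟨hm1, hm2⟩ := Finset.mem_Icc.mp hm
          exact h2 ⟨m, hm1, by omega, heq⟩
  calc j = ((Finset.Icc 1 j).image f).card := by
          rw [Finset.card_image_of_injOn hinj, Nat.card_Icc]; omega
    _ ≤ (G.neighborFinset y).card := Finset.card_le_card hsub
    _ = G.degree y := G.card_neighborFinset_eq_degree y
end

section
/- Let B be a finite simple graph with n vertices and let c be a P-saturating coloring of B of maximal weight, where P has a ⊕-arc from white to black and a ⊖-arc from black to white. If B has no universal vertices and the number of black vertices is strictly less than ⌊n/2⌋, then every white vertex a has a black non-neighbor, i.e., there exists a black vertex b with {a,b} ∉ E. -/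
/-- If c (with witness function w) is a P-saturating coloring of
maximal weight (pattern: ⊕ white→black, ⊖ black→white), the graph has no universal
vertex, and fewer than ⌊n/2⌋ vertices are black, then every white vertex has a
black non-neighbour. Black is `true`. -/
theorem stmt_11 {V : Type*} [Fintype V] [DecidableEq V] (G : SimpleGraph V)
    [DecidableRel G.Adj] (c : V → Bool) (w : V → V)
    (hw : ∀ x, w x ≠ x)
    (hsat : ∀ x, (G.Adj x (w x) → c x = false ∧ c (w x) = true) ∧
                 (¬ G.Adj x (w x) → c x = true ∧ c (w x) = false))
    (hmax : ∀ (c' : V → Bool) (w' : V → V), (∀ x, w' x ≠ x) →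
      (∀ x, (G.Adj x (w' x) → c' x = false ∧ c' (w' x) = true) ∧
            (¬ G.Adj x (w' x) → c' x = true ∧ c' (w' x) = false)) →
      (Finset.univ.filter (fun v => c' v = true)).card ≤
        (Finset.univ.filter (fun v => c v = true)).card)
    (hnouniv : ∀ v : V, ∃ x : V, x ≠ v ∧ ¬ G.Adj v x)
    (hsmall : (Finset.univ.filter (fun v => c v = true)).card < Fintype.card V / 2) :
    ∀ a : V, c a = false → ∃ b : V, c b = true ∧ ¬ G.Adj a b := by
  intro a ha
  by_contra hcon
  push_neg at hcon
  -- a is adjacent to every black vertex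
  have hall : ∀ b : V, c b = true → G.Adj a b := fun b hb => hcon b hb
  obtain ⟨x, hxa, hxadj⟩ := hnouniv a
  -- x must be white
  have hxw : c x = false := by
    cases hx : c x with
    | false => rfl
    | true => exact absurd (hall x hx) hxadj
  -- new coloring: a becomes black
  set c' : V → Bool := fun v => if v = a then true else c v with hc'
  set w' : V → V := fun v => if v = a then x else w v with hw'
  have hw'ne : ∀ v, w' v ≠ v := by
    intro v
    simp only [hw']
    by_cases hv : v = a
    · simp [hv]; exact fun h => hxa (h ▸ rfl)
    · simp [hv]; exact hw v
  have hsat' : ∀ v, (G.Adj v (w' v) → c' v = false ∧ c' (w' v) = true) ∧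
      (¬ G.Adj v (w' v) → c' v = true ∧ c' (w' v) = false) := by
    intro v
    by_cases hv : v = a
    · subst hv
      simp only [hw', hc', if_pos rfl]
      constructor
      · intro h; exact absurd h hxadj
      · intro _; simp [if_neg hxa, hxw]
    · simp only [hw', hc', if_neg hv]
      by_cases hadj : G.Adj v (w v)
      · obtain ⟨h1, h2⟩ := (hsat v).1 hadj
        refine ⟨fun _ => ⟨h1, ?_⟩, fun h => absurd hadj h⟩
        by_cases hwv : w v = a
        · simp [hwv]
        · simp [hwv, h2]
      · obtain ⟨h1, h2⟩ := (hsat v).2 hadj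
        refine ⟨fun h => absurd h hadj, fun _ => ⟨h1, ?_⟩⟩
        by_cases hwv : w v = a
        · -- v is black and not adjacent to a, contradicting hall
          exfalso
          apply hadj
          rw [hwv]
          exact (hall v h1).symm
        · simp [hwv, h2]
  have hle := hmax c' w' hw'ne hsat'
  have hset : Finset.univ.filter (fun v => c' v = true) =
      insert a (Finset.univ.filter (fun v => c v = true)) := by
    ext v
    simp only [Finset.mem_filter, Finset.mem_insert, Finset.mem_univ, true_and, hc']
    by_cases hv : v = a
    · simp [hv]
    · simp [hv]
  rw [hset, Finset.card_insert_of_notMem (by simp [ha])] at hle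
  omega
end

section
/- Let ψ be a d-CNF formula and k a natural number. Define a branching process: if every clause of ψ contains a negative literal, then ψ is satisfied by the all-zero assignment; otherwise pick a clause with only positive literals x₁, …, x_e (e ≤ d) and branch into the e formulas obtained by setting one x_i to true. Then ψ has a satisfying assignment of weight at most k if and only if some leaf of this branching tree of depth at most k+1 reaches a formula whose every clause contains a negative literal, within at most k branching steps. -/
/-- Setting variable x to true: delete clauses containing x positively, delete
the literal ¬x from the remaining clauses. -/
def setTrue (ψ : Finset (Finset (ℕ × Bool))) (x : ℕ) : Finset (Finset (ℕ × Bool)) :=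
  (ψ.filter (fun C => (x, true) ∉ C)).image (fun C => C.erase (x, false))

/-- Every clause contains a negative literal (so the all-zero assignment satisfies). -/
def allNeg (ψ : Finset (Finset (ℕ × Bool))) : Prop :=
  ∀ C ∈ ψ, ∃ p ∈ C, p.2 = false

/-- Some leaf of the branching tree with at most n branching steps reaches a formula
all of whose clauses contain a negative literal: either ψ is already done, or we may
branch on an all-positive clause, setting one of its variables to true. -/
def success : ℕ → Finset (Finset (ℕ × Bool)) → Prop
  | 0, ψ => allNeg ψ
  | n + 1, ψ => allNeg ψ ∨
      ∃ C ∈ ψ, (∀ p ∈ C, p.2 = true) ∧ ∃ p ∈ C, success n (setTrue ψ p.1)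

namespace Stmt13Aux

def vars (ψ : Finset (Finset (ℕ × Bool))) : Finset ℕ := ψ.sup (fun C => C.image Prod.fst)

lemma mem_vars {ψ : Finset (Finset (ℕ × Bool))} {y : ℕ} :
    y ∈ vars ψ ↔ ∃ C ∈ ψ, ∃ b, (y, b) ∈ C := by
  simp only [vars, Finset.mem_sup, Finset.mem_image]
  constructor
  · rintro ⟨C, hC, p, hp, rfl⟩
    exact ⟨C, hC, p.2, hp⟩
  · rintro ⟨C, hC, b, hb⟩
    exact ⟨C, hC, (y, b), hb, rfl⟩

lemma mem_setTrue {ψ : Finset (Finset (ℕ × Bool))} {x : ℕ} {C' : Finset (ℕ × Bool)} :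
    C' ∈ setTrue ψ x ↔ ∃ C ∈ ψ, (x, true) ∉ C ∧ C' = C.erase (x, false) := by
  simp only [setTrue, Finset.mem_image, Finset.mem_filter]
  constructor
  · rintro ⟨C, ⟨hC, hx⟩, rfl⟩; exact ⟨C, hC, hx, rfl⟩
  · rintro ⟨C, hC, hx, rfl⟩; exact ⟨C, ⟨hC, hx⟩, rfl⟩

lemma vars_setTrue {ψ : Finset (Finset (ℕ × Bool))} {x : ℕ} :
    vars (setTrue ψ x) ⊆ (vars ψ).erase x := by
  intro y hy
  rw [mem_vars] at hy
  obtain ⟨C', hC', b, hb⟩ := hy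
  rw [mem_setTrue] at hC'
  obtain ⟨C, hC, hx, rfl⟩ := hC'
  rw [Finset.mem_erase] at hb
  refine Finset.mem_erase.2 ⟨?_, mem_vars.2 ⟨C, hC, b, hb.2⟩⟩
  rintro rfl
  cases b
  · exact hb.1 rfl
  · exact hx hb.2

lemma forward : ∀ (n : ℕ) (ψ : Finset (Finset (ℕ × Bool))) (β : ℕ → Bool),
    (∀ C ∈ ψ, ∃ p ∈ C, β p.1 = p.2) →
    ((vars ψ).filter (fun x => β x = true)).card ≤ n → success n ψ := by
  intro n
  induction n with
  | zero =>
    intro ψ β hsat hcard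
    intro C hC
    by_contra h
    push_neg at h
    obtain ⟨p, hp, hβp⟩ := hsat C hC
    have hpt : p.2 = true := by
      cases hb : p.2
      · exact absurd hb (h p hp)
      · rfl
    have : p.1 ∈ (vars ψ).filter (fun x => β x = true) :=
      Finset.mem_filter.2 ⟨mem_vars.2 ⟨C, hC, p.2, by simpa using hp⟩, by rw [hβp, hpt]⟩
    have := Finset.card_pos.2 ⟨p.1, this⟩
    omega
  | succ n ih =>
    intro ψ β hsat hcard
    by_cases hall : allNeg ψ
    · exact Or.inl hall
    · right
      unfold allNeg at hall
      push_neg at hall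
      obtain ⟨C, hC, hpos⟩ := hall
      have hpos' : ∀ p ∈ C, p.2 = true := by
        intro p hp
        cases hb : p.2
        · exact absurd hb (by simpa using hpos p hp)
        · rfl
      obtain ⟨p, hp, hβp⟩ := hsat C hC
      have hβx : β p.1 = true := by rw [hβp]; exact hpos' p hp
      refine ⟨C, hC, hpos', p, hp, ?_⟩
      apply ih (setTrue ψ p.1) β
      · intro C' hC'
        rw [mem_setTrue] at hC'
        obtain ⟨D, hD, hx, rfl⟩ := hC'
        obtain ⟨q, hq, hβq⟩ := hsat D hD
        refine ⟨q, Finset.mem_erase.2 ⟨?_, hq⟩, hβq⟩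
        rintro rfl
        rw [hβx] at hβq
        exact Bool.noConfusion hβq
      · have hsub : (vars (setTrue ψ p.1)).filter (fun x => β x = true) ⊆
            (((vars ψ).filter (fun x => β x = true)).erase p.1) := by
          intro y hy
          rw [Finset.mem_filter] at hy
          have := vars_setTrue hy.1
          rw [Finset.mem_erase] at this
          exact Finset.mem_erase.2 ⟨this.1, Finset.mem_filter.2 ⟨this.2, hy.2⟩⟩
        have hx_mem : p.1 ∈ (vars ψ).filter (fun x => β x = true) :=
          Finset.mem_filter.2 ⟨mem_vars.2 ⟨C, hC, p.2, by simpa using hp⟩, hβx⟩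
        calc ((vars (setTrue ψ p.1)).filter (fun x => β x = true)).card
            ≤ (((vars ψ).filter (fun x => β x = true)).erase p.1).card :=
              Finset.card_le_card hsub
          _ = ((vars ψ).filter (fun x => β x = true)).card - 1 :=
              Finset.card_erase_of_mem hx_mem
          _ ≤ n := by omega

lemma backward : ∀ (n : ℕ) (ψ : Finset (Finset (ℕ × Bool))), success n ψ →
    ∃ S : Finset ℕ, S ⊆ vars ψ ∧ S.card ≤ n ∧
      ∀ C ∈ ψ, ∃ p ∈ C, decide (p.1 ∈ S) = p.2 := by
  intro n
  induction n with
  | zero =>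
    intro ψ h
    refine ⟨∅, Finset.empty_subset _, le_refl _, ?_⟩
    intro C hC
    obtain ⟨p, hp, hpf⟩ := h C hC
    exact ⟨p, hp, by simp [hpf]⟩
  | succ n ih =>
    intro ψ h
    rcases h with h | ⟨C, hC, hpos, p, hp, hsucc⟩
    · refine ⟨∅, Finset.empty_subset _, Nat.zero_le _, ?_⟩
      intro D hD
      obtain ⟨q, hq, hqf⟩ := h D hD
      exact ⟨q, hq, by simp [hqf]⟩
    · obtain ⟨S, hSsub, hScard, hSsat⟩ := ih _ hsucc
      refine ⟨insert p.1 S, ?_, ?_, ?_⟩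
      · intro y hy
        rcases Finset.mem_insert.1 hy with rfl | hy
        · exact mem_vars.2 ⟨C, hC, p.2, by simpa using hp⟩
        · have := hSsub hy
          exact Finset.mem_erase.1 (vars_setTrue this) |>.2
      · calc (insert p.1 S).card ≤ S.card + 1 := Finset.card_insert_le _ _
          _ ≤ n + 1 := by omega
      · intro D hD
        by_cases hxD : (p.1, true) ∈ D
        · exact ⟨(p.1, true), hxD, by simp⟩
        · have hD' : D.erase (p.1, false) ∈ setTrue ψ p.1 :=
            mem_setTrue.2 ⟨D, hD, hxD, rfl⟩
          obtain ⟨q, hq, hqsat⟩ := hSsat _ hD'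
          rw [Finset.mem_erase] at hq
          refine ⟨q, hq.2, ?_⟩
          have hq1 : q.1 ≠ p.1 ∨ q.2 = true := by
            by_cases h1 : q.1 = p.1
            · right
              cases hb : q.2
              · exfalso; apply hq.1; ext <;> simp [h1, hb]
              · rfl
            · left; exact h1
          rcases hq1 with h1 | h2
          · rw [show decide (q.1 ∈ insert p.1 S) = decide (q.1 ∈ S) from by
              simp [Finset.mem_insert, h1]]
            exact hqsat
          · -- q.2 = true; if q.1 ∈ S then decide true = true; need decide (q.1 ∈ insert p.1 S) = true
            rw [h2]
            rw [h2] at hqsat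
            simp only [decide_eq_true_eq] at hqsat ⊢
            exact Finset.mem_insert.2 (Or.inr hqsat)

end Stmt13Aux

/-- a d-CNF formula ψ has a satisfying assignment of weight at most k
iff the bounded branching tree of depth at most k+1 (at most k branching steps)
succeeds. -/
theorem stmt_13 (d k : ℕ) (ψ : Finset (Finset (ℕ × Bool)))
    (hd : ∀ C ∈ ψ, C.card ≤ d) :
    (∃ β : ℕ → Bool, (∀ C ∈ ψ, ∃ p ∈ C, β p.1 = p.2) ∧
      (((ψ.sup (fun C => C.image Prod.fst)).filter (fun x => β x = true)).card ≤ k))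
    ↔ success k ψ := by
  constructor
  · rintro ⟨β, hsat, hcard⟩
    exact Stmt13Aux.forward k ψ β hsat hcard
  · intro h
    obtain ⟨S, hSsub, hScard, hSsat⟩ := Stmt13Aux.backward k ψ h
    refine ⟨fun y => decide (y ∈ S), hSsat, ?_⟩
    have : ((ψ.sup (fun C => C.image Prod.fst)).filter
        (fun x => (decide (x ∈ S) : Bool) = true)) = S := by
      ext y
      simp only [Finset.mem_filter, decide_eq_true_eq]
      exact ⟨fun h => h.2, fun h => ⟨hSsub h, h⟩⟩
    rw [this]
    exact hScard
end
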